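/- Fix μ₁ < μ₂ ∈ ℝ, π ∈ (0,1) and δ > 0. Writing p_σ(x) = π φ_{μ₁,σ}(x) + (1−π) φ_{μ₂,σ}(x) and q_σ(x) = φ_{μ₁,σ}(x), the score of the mixture converges to the score of the left component uniformly on the half-line left of the midpoint: sup { |s_{p_σ}(x) − s_{q_σ}(x)| : x ≤ (μ₁+μ₂)/2 − δ } → 0 as σ → 0⁺. -/

import Mathlib

open MeasureTheory Filter

/-- Gaussian density with mean `μ` and standard deviation `σ`. -/
noncomputable def gaussian (μ σ : ℝ) (x : ℝ) : ℝ :=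
  (σ * Real.sqrt (2 * Real.pi))⁻¹ * Real.exp (-(x - μ) ^ 2 / (2 * σ ^ 2))

/-- The score of a density `ρ`: the derivative of its log. -/
noncomputable def score (ρ : ℝ → ℝ) (x : ℝ) : ℝ :=
  deriv (fun y => Real.log (ρ y)) x

/-- Fisher divergence between densities `q` and `p`. -/
noncomputable def fisherDiv (q p : ℝ → ℝ) : ℝ :=
  ∫ x : ℝ, q x * (score q x - score p x) ^ 2

/-! At each point the mixture score is the average of the component scores weighted by the
posterior probabilities `a f x / (a f x + b g x)` and `b g x / (a f x + b g x)`, so its distance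
to the score of `f` is the posterior weight of `g` times the gap between the two scores.
For two Gaussians of common variance `σ²` the score gap is `(μ₂ - μ₁) / σ²`, while left of the
midpoint by `δ` the likelihood ratio `φ_{μ₂,σ} / φ_{μ₁,σ}` is at most `exp (-(μ₂ - μ₁) δ / σ²)`.
The product of the two bounds the score difference uniformly on the half-line and tends to `0`
as `σ → 0⁺`. -/

open Real

lemma score_eq_of_hasDerivAt {ρ : ℝ → ℝ} {ρ' x : ℝ} (h : HasDerivAt ρ ρ' x) (hx : ρ x ≠ 0) :
    score ρ x = ρ' / ρ x :=
  (h.log hx).deriv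

lemma score_mixture_sub_score {f g : ℝ → ℝ} {a b s t x : ℝ}
    (hf : HasDerivAt f (f x * s) x) (hg : HasDerivAt g (g x * t) x)
    (hfx : f x ≠ 0) (hmix : a * f x + b * g x ≠ 0) :
    score (fun y => a * f y + b * g y) x - score f x
      = b * g x / (a * f x + b * g x) * (t - s) := by
  rw [score_eq_of_hasDerivAt ((hf.const_mul a).fun_add (hg.const_mul b)) hmix,
    score_eq_of_hasDerivAt hf hfx]
  field_simp
  ring

lemma gaussian_pos {σ : ℝ} (hσ : 0 < σ) (μ x : ℝ) : 0 < gaussian μ σ x := by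
  unfold gaussian
  positivity

lemma hasDerivAt_gaussian {σ : ℝ} (hσ : σ ≠ 0) (μ x : ℝ) :
    HasDerivAt (gaussian μ σ) (gaussian μ σ x * (-(x - μ) / σ ^ 2)) x := by
  have hexponent : HasDerivAt (fun y : ℝ => -(y - μ) ^ 2 / (2 * σ ^ 2)) (-(x - μ) / σ ^ 2) x := by
    refine (((hasDerivAt_id x).sub_const μ).fun_pow 2).fun_neg.div_const (2 * σ ^ 2)
      |>.congr_deriv ?_
    field_simp
    simp
  refine (hexponent.exp.const_mul (σ * √(2 * π))⁻¹).congr_deriv ?_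
  simp only [gaussian]
  ring

lemma gaussian_eq_mul_exp (μ₁ μ₂ σ x : ℝ) :
    gaussian μ₂ σ x = gaussian μ₁ σ x * exp ((μ₂ - μ₁) * (x - (μ₁ + μ₂) / 2) / σ ^ 2) := by
  unfold gaussian
  rw [mul_assoc, ← exp_add]
  congr 2
  rcases eq_or_ne σ 0 with rfl | hσ
  · simp
  · field_simp
    ring

lemma gaussian_le_mul_exp_of_le_midpoint_sub {μ₁ μ₂ σ δ x : ℝ} (hμ : μ₁ ≤ μ₂) (hσ : 0 < σ)
    (hx : x ≤ (μ₁ + μ₂) / 2 - δ) :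
    gaussian μ₂ σ x ≤ gaussian μ₁ σ x * exp (-((μ₂ - μ₁) * δ) / σ ^ 2) := by
  rw [gaussian_eq_mul_exp μ₁ μ₂]
  gcongr (gaussian μ₁ σ x) * exp (?_ / _)
  · exact (gaussian_pos hσ μ₁ x).le
  · nlinarith

lemma abs_score_mixture_sub_score_gaussian_le {μ₁ μ₂ w σ δ x : ℝ} (hμ : μ₁ ≤ μ₂)
    (hw : w ∈ Set.Ioo (0 : ℝ) 1) (hσ : 0 < σ) (hx : x ≤ (μ₁ + μ₂) / 2 - δ) :
    |score (fun y => w * gaussian μ₁ σ y + (1 - w) * gaussian μ₂ σ y) x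
        - score (fun y => gaussian μ₁ σ y) x|
      ≤ (1 - w) * (μ₂ - μ₁) / w * ((σ ^ 2)⁻¹ * exp (-((μ₂ - μ₁) * δ) / σ ^ 2)) := by
  obtain ⟨hw₀, hw₁⟩ := hw
  have hφ₁ := gaussian_pos hσ μ₁ x
  have hφ₂ := gaussian_pos hσ μ₂ x
  have hw' : 0 < 1 - w := by linarith
  have hmix : 0 < w * gaussian μ₁ σ x + (1 - w) * gaussian μ₂ σ x := by positivity
  rw [score_mixture_sub_score (hasDerivAt_gaussian hσ.ne' μ₁ x)
    (hasDerivAt_gaussian hσ.ne' μ₂ x) hφ₁.ne' hmix.ne']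
  have hgap : -(x - μ₂) / σ ^ 2 - -(x - μ₁) / σ ^ 2 = (μ₂ - μ₁) / σ ^ 2 := by ring
  rw [hgap, abs_of_nonneg (by have := sub_nonneg.2 hμ; positivity)]
  calc (1 - w) * gaussian μ₂ σ x / (w * gaussian μ₁ σ x + (1 - w) * gaussian μ₂ σ x)
        * ((μ₂ - μ₁) / σ ^ 2)
      ≤ (1 - w) * (gaussian μ₁ σ x * exp (-((μ₂ - μ₁) * δ) / σ ^ 2)) / (w * gaussian μ₁ σ x)
        * ((μ₂ - μ₁) / σ ^ 2) := by
        have := sub_nonneg.2 hμ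
        gcongr
        · exact gaussian_le_mul_exp_of_le_midpoint_sub hμ hσ hx
        · linarith [mul_pos hw' hφ₂]
    _ = (1 - w) * (μ₂ - μ₁) / w * ((σ ^ 2)⁻¹ * exp (-((μ₂ - μ₁) * δ) / σ ^ 2)) := by
        field_simp

lemma tendsto_inv_sq_mul_exp_neg_div_sq {c : ℝ} (hc : 0 < c) :
    Tendsto (fun σ : ℝ => (σ ^ 2)⁻¹ * exp (-c / σ ^ 2)) (nhdsWithin 0 (Set.Ioi 0)) (nhds 0) := by
  have hinv_sq : Tendsto (fun σ : ℝ => (σ ^ 2)⁻¹) (nhdsWithin 0 (Set.Ioi 0)) atTop := by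
    simpa only [Function.comp_def, inv_pow] using
      (tendsto_pow_atTop (α := ℝ) two_ne_zero).comp tendsto_inv_nhdsGT_zero
  convert (tendsto_rpow_mul_exp_neg_mul_atTop_nhds_zero 1 c hc).comp hinv_sq using 2
  simp [div_eq_mul_inv]

lemma tendsto_sSup_abs_of_abs_le {ι α : Type*} {l : Filter ι} {f : ι → α → ℝ} {s : Set α}
    {B : ι → ℝ} (hs : s.Nonempty) (hB : Tendsto B l (nhds 0))
    (hfB : ∀ᶠ i in l, ∀ x ∈ s, |f i x| ≤ B i) :
    Tendsto (fun i => sSup {r : ℝ | ∃ x ∈ s, r = |f i x|}) l (nhds 0) := by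
  obtain ⟨x₀, hx₀⟩ := hs
  refine squeeze_zero' ?_ ?_ hB
  · filter_upwards [hfB] with i hi
    refine (abs_nonneg (f i x₀)).trans (le_csSup ⟨B i, ?_⟩ ⟨x₀, hx₀, rfl⟩)
    rintro r ⟨x, hx, rfl⟩
    exact hi x hx
  · filter_upwards [hfB] with i hi
    refine csSup_le ⟨_, x₀, hx₀, rfl⟩ ?_
    rintro r ⟨x, hx, rfl⟩
    exact hi x hx

/-- uniform convergence of the mixture score to the score of the left
component on a half-line strictly left of the midpoint, as `σ → 0⁺`. -/
theorem mixture_score_uniform_convergence_small_variance (μ₁ μ₂ w δ : ℝ)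
    (hμ : μ₁ < μ₂) (hw : w ∈ Set.Ioo (0 : ℝ) 1) (hδ : 0 < δ) :
    Tendsto
      (fun σ => sSup {r : ℝ | ∃ x ≤ (μ₁ + μ₂) / 2 - δ,
        r = |score (fun y => w * gaussian μ₁ σ y + (1 - w) * gaussian μ₂ σ y) x
              - score (fun y => gaussian μ₁ σ y) x|})
      (nhdsWithin 0 (Set.Ioi 0)) (nhds 0) := by
  have hB := (tendsto_inv_sq_mul_exp_neg_div_sq (mul_pos (sub_pos.2 hμ) hδ)).const_mul
    ((1 - w) * (μ₂ - μ₁) / w)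
  rw [mul_zero] at hB
  refine tendsto_sSup_abs_of_abs_le (s := Set.Iic ((μ₁ + μ₂) / 2 - δ)) Set.nonempty_Iic hB ?_
  filter_upwards [self_mem_nhdsWithin] with σ hσ x hx
  exact abs_score_mixture_sub_score_gaussian_le hμ.le hw hσ hx
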